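/- arXiv:2004.03202 — 5 statements merged into one kernel-verified Lean document; each statement's English description precedes it below -/
import Mathlib

section
/- Let A = (a_ij) ∈ {0,1}^{n×n} be the symmetric adjacency matrix of a μ-dense network and let θ ∈ ℝⁿ be such that the matrix J(θ) is positive semidefinite. Then the squared magnitude of the unnormalized order parameter satisfies |r(θ)|² = Σ_{i,j} cos(θᵢ − θⱼ) ≥ (2μ − 3/2)n² + 2(1 − μ)n. -/
/-!
Testing the quadratic form of `J(θ)` on the vectors `cos θ` and `sin θ` and adding the two
results gives `Σ a_ij cos²(θ_i - θ_j) ≤ Σ a_ij cos(θ_i - θ_j)`.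
Since `a_ij ≤ 1` and `a_ii = 0`, comparing each of these sums with the corresponding sum over all
pairs `(i, j)` bounds `|r(θ)|²` from below by `Σ_{i,j} cos²(θ_i - θ_j) + 2m + 2n - 2n²`, where
`m = Σ a_ij ≥ μ n (n - 1)`. Finally `Σ_{i,j} cos²(θ_i - θ_j) ≥ n² / 2`, because
`Σ_{i,j} cos(2θ_i - 2θ_j) = |Σ_j e^{2iθ_j}|² ≥ 0`.
-/

open Real Finset

noncomputable section

/-- The matrix `J(θ)` associated with adjacency matrix `A` and phases `θ`. -/
def kuraJ {n : ℕ} (A : Matrix (Fin n) (Fin n) ℝ) (θ : Fin n → ℝ) :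
    Matrix (Fin n) (Fin n) ℝ :=
  Matrix.of fun i j =>
    if i = j then ∑ k, A i k * Real.cos (θ i - θ k)
    else -(A i j * Real.cos (θ i - θ j))

open Matrix

section

variable {ι : Type*} [Fintype ι]

theorem sum_sum_cos_sub_eq_sq_add_sq (φ : ι → ℝ) :
    ∑ i, ∑ j, cos (φ i - φ j) = (∑ i, cos (φ i)) ^ 2 + (∑ i, sin (φ i)) ^ 2 := by
  simp only [sq, sum_mul_sum, ← sum_add_distrib, cos_sub]

theorem norm_sum_exp_mul_I_sq (φ : ι → ℝ) :
    ‖∑ j, Complex.exp (φ j * Complex.I)‖ ^ 2 = ∑ i, ∑ j, cos (φ i - φ j) := by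
  rw [Complex.sq_norm, Complex.normSq_apply, sum_sum_cos_sub_eq_sq_add_sq, Complex.re_sum,
    Complex.im_sum]
  simp only [Complex.exp_ofReal_mul_I_re, Complex.exp_ofReal_mul_I_im, sq]

theorem sum_sum_cos_sub_nonneg (φ : ι → ℝ) : 0 ≤ ∑ i, ∑ j, cos (φ i - φ j) := by
  rw [sum_sum_cos_sub_eq_sq_add_sq]
  positivity

theorem card_sq_div_two_le_sum_sum_cos_sub_sq (φ : ι → ℝ) :
    (Fintype.card ι : ℝ) ^ 2 / 2 ≤ ∑ i, ∑ j, cos (φ i - φ j) ^ 2 := by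
  have h := sum_sum_cos_sub_nonneg fun i => 2 * φ i
  simp only [cos_sq, mul_sub, sum_add_distrib, ← sum_div, sum_const, card_univ, nsmul_eq_mul,
    mul_one, ← sq]
  linarith

theorem sum_sum_cos_sub_sq_add_sum_sum_le_of_le_one {A : Matrix ι ι ℝ}
    (hA : ∀ i j, A i j ≤ 1) (φ : ι → ℝ) :
    ∑ i, ∑ j, cos (φ i - φ j) ^ 2 + ∑ i, ∑ j, A i j ≤
      ∑ i, ∑ j, A i j * cos (φ i - φ j) ^ 2 + (Fintype.card ι : ℝ) ^ 2 := by
  have h : 0 ≤ ∑ i, ∑ j, (1 - A i j) * (1 - cos (φ i - φ j) ^ 2) :=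
    sum_nonneg fun i _ => sum_nonneg fun j _ =>
      mul_nonneg (sub_nonneg.2 (hA i j)) (sub_nonneg.2 (cos_sq_le_one _))
  simp only [sub_mul, mul_sub, one_mul, mul_one, sum_sub_distrib, sum_const, card_univ,
    nsmul_eq_mul] at h
  linarith

theorem sum_sum_mul_cos_sub_add_le_of_le_one {A : Matrix ι ι ℝ} (hA : ∀ i j, A i j ≤ 1)
    (hAdiag : ∀ i, A i i = 0) (φ : ι → ℝ) :
    ∑ i, ∑ j, A i j * cos (φ i - φ j) + ∑ i, ∑ j, A i j + 2 * Fintype.card ι ≤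
      ∑ i, ∑ j, cos (φ i - φ j) + (Fintype.card ι : ℝ) ^ 2 := by
  have hterm : ∀ i j, 0 ≤ (1 - A i j) * (1 + cos (φ i - φ j)) := fun i j =>
    mul_nonneg (sub_nonneg.2 (hA i j)) (by linarith [neg_one_le_cos (φ i - φ j)])
  -- the diagonal term of row `i` is `(1 - 0) * (1 + cos 0) = 2`
  have h : ∑ _i : ι, (2 : ℝ) ≤ ∑ i, ∑ j, (1 - A i j) * (1 + cos (φ i - φ j)) :=
    sum_le_sum fun i _ => by
      have hdiag := single_le_sum (fun j _ => hterm i j) (mem_univ i)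
      norm_num [hAdiag] at hdiag
      linarith
  simp only [sub_mul, mul_add, one_mul, mul_one, sum_sub_distrib, sum_add_distrib, sum_const,
    card_univ, nsmul_eq_mul] at h
  linarith

theorem dotProduct_diagonal_sum_sub_mulVec {R : Type*} [CommRing R] [DecidableEq ι]
    (W : Matrix ι ι R) (x : ι → R) :
    x ⬝ᵥ (diagonal (fun i => ∑ j, W i j) - W) *ᵥ x =
      ∑ i, ∑ j, W i j * (x i ^ 2 - x i * x j) := by
  rw [sub_mulVec, dotProduct_sub]
  simp only [dotProduct, mulVec_diagonal]
  simp only [mulVec, dotProduct, sum_mul, mul_sum, ← sum_sub_distrib]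
  exact sum_congr rfl fun i _ => sum_congr rfl fun j _ => by ring

end

def couplingMatrix {ι : Type*} (A : Matrix ι ι ℝ) (θ : ι → ℝ) : Matrix ι ι ℝ :=
  of fun i j => A i j * cos (θ i - θ j)

theorem kuraJ_eq_diagonal_sub_couplingMatrix {n : ℕ} {A : Matrix (Fin n) (Fin n) ℝ}
    (hAdiag : ∀ i, A i i = 0) (θ : Fin n → ℝ) :
    kuraJ A θ = diagonal (fun i => ∑ j, couplingMatrix A θ i j) - couplingMatrix A θ := by
  ext i j
  by_cases h : i = j
  · subst h
    simp [kuraJ, couplingMatrix, hAdiag]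
  · simp [kuraJ, couplingMatrix, h]

theorem sum_sum_mul_cos_sub_sq_le_of_posSemidef {n : ℕ} {A : Matrix (Fin n) (Fin n) ℝ}
    (hAdiag : ∀ i, A i i = 0) {θ : Fin n → ℝ} (hpsd : (kuraJ A θ).PosSemidef) :
    ∑ i, ∑ j, A i j * cos (θ i - θ j) ^ 2 ≤ ∑ i, ∑ j, A i j * cos (θ i - θ j) := by
  have hcos := hpsd.dotProduct_mulVec_nonneg fun i => cos (θ i)
  have hsin := hpsd.dotProduct_mulVec_nonneg fun i => sin (θ i)
  rw [kuraJ_eq_diagonal_sub_couplingMatrix hAdiag, star_trivial,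
    dotProduct_diagonal_sum_sub_mulVec] at hcos hsin
  have hsum : ∑ i, ∑ j, couplingMatrix A θ i j * (cos (θ i) ^ 2 - cos (θ i) * cos (θ j)) +
      ∑ i, ∑ j, couplingMatrix A θ i j * (sin (θ i) ^ 2 - sin (θ i) * sin (θ j)) =
      ∑ i, ∑ j, A i j * cos (θ i - θ j) - ∑ i, ∑ j, A i j * cos (θ i - θ j) ^ 2 := by
    simp only [← sum_add_distrib, ← sum_sub_distrib, couplingMatrix, of_apply]
    refine sum_congr rfl fun i _ => sum_congr rfl fun j _ => ?_
    rw [cos_sub]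
    linear_combination A i j * (cos (θ i) * cos (θ j) + sin (θ i) * sin (θ j)) *
      sin_sq_add_cos_sq (θ i)
  linarith

theorem order_parameter_lower_bound_general
    (n : ℕ) (A : Matrix (Fin n) (Fin n) ℝ)
    (hA01 : ∀ i j, A i j = 0 ∨ A i j = 1) (hAdiag : ∀ i, A i i = 0)
    (μ : ℝ)
    (hdense : ∀ i, μ * ((n : ℝ) - 1) ≤ ∑ j, A i j)
    (θ : Fin n → ℝ) (hpsd : (kuraJ A θ).PosSemidef) :
    ‖∑ j, Complex.exp ((θ j : ℂ) * Complex.I)‖ ^ 2 =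
        ∑ i, ∑ j, Real.cos (θ i - θ j) ∧
    ∑ i, ∑ j, Real.cos (θ i - θ j) ≥
        (2 * μ - 3 / 2) * (n : ℝ) ^ 2 + 2 * (1 - μ) * n := by
  refine ⟨norm_sum_exp_mul_I_sq θ, ?_⟩
  have hA : ∀ i j, A i j ≤ 1 := fun i j => by rcases hA01 i j with h | h <;> simp [h]
  have hdensity : n * (μ * ((n : ℝ) - 1)) ≤ ∑ i, ∑ j, A i j := by
    simpa using card_nsmul_le_sum univ _ _ fun i _ => hdense i
  have hnonedges := sum_sum_mul_cos_sub_add_le_of_le_one hA hAdiag θ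
  have hedges := sum_sum_cos_sub_sq_add_sum_sum_le_of_le_one hA θ
  have hpsd' := sum_sum_mul_cos_sub_sq_le_of_posSemidef hAdiag hpsd
  have hhalf := card_sq_div_two_le_sum_sum_cos_sub_sq θ
  rw [Fintype.card_fin] at hnonedges hedges hhalf
  linarith

/-- If `J(θ) ⪰ 0` on a μ-dense network, then the squared magnitude of the unnormalized order
parameter `r(θ) = Σ_j e^{iθ_j}` satisfies
`|r(θ)|² = Σ_{i,j} cos(θ_i − θ_j) ≥ (2μ − 3/2)n² + 2(1 − μ)n`. -/
theorem order_parameter_lower_bound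
    (n : ℕ) (hn : 2 ≤ n) (A : Matrix (Fin n) (Fin n) ℝ)
    (hA01 : ∀ i j, A i j = 0 ∨ A i j = 1) (hAsym : A.IsSymm) (hAdiag : ∀ i, A i i = 0)
    (μ : ℝ) (hμ0 : 0 ≤ μ) (hμ1 : μ ≤ 1)
    (hdense : ∀ i, μ * ((n : ℝ) - 1) ≤ ∑ j, A i j)
    (θ : Fin n → ℝ) (hpsd : (kuraJ A θ).PosSemidef) :
    ‖∑ j, Complex.exp ((θ j : ℂ) * Complex.I)‖ ^ 2 =
        ∑ i, ∑ j, Real.cos (θ i - θ j) ∧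
    ∑ i, ∑ j, Real.cos (θ i - θ j) ≥
        (2 * μ - 3 / 2) * (n : ℝ) ^ 2 + 2 * (1 - μ) * n :=
  order_parameter_lower_bound_general n A hA01 hAdiag μ hdense θ hpsd
end
end

section
/- Let A = (a_ij) ∈ {0,1}^{n×n} be the symmetric adjacency matrix of a μ-dense network with zero diagonal, K > 0, and let θ ∈ ℝⁿ be an equilibrium of the Kuramoto model, i.e., (K/n) Σⱼ a_ij sin(θᵢ − θⱼ) = ωᵢ for all i. Then for every index i, |Σ_{j=1}^n sin(θⱼ − θᵢ)| ≤ n K⁻¹ ‖ω‖_∞ + (1 − μ)(n − 1). Equivalently, writing r(θ) = Σⱼ e^{iθⱼ} = |r| e^{iψ}, one has |r(θ)| · |sin(ψ − θᵢ)| ≤ n K⁻¹ ‖ω‖_∞ + (1 − μ)(n − 1). -/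
open Real Finset

noncomputable section

/- At an equilibrium the weighted sum `Σ_j a_ij sin(θ_i − θ_j)` equals `n ω_i / K`, and the
complementary sum over non-neighbours has at most `(1 − μ)(n − 1)` nonzero terms, each of modulus
at most one. The order-parameter form is the same quantity: `Im(r e^{−iθ_i}) = |r| sin(ψ − θ_i)`. -/

lemma abs_le_of_div_mul_eq {n K s w : ℝ} (hn : 0 < n) (hK : 0 < K) (h : K / n * s = w) :
    |s| ≤ n * K⁻¹ * |w| := by
  have hs : s = n * K⁻¹ * w := by
    rw [← h]
    field_simp
  rw [hs, abs_mul, abs_of_pos (by positivity : 0 < n * K⁻¹)]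

lemma abs_sum_one_sub_mul_sin_sub_le {ι : Type*} [Fintype ι] [DecidableEq ι]
    (a x : ι → ℝ) (i : ι) (ha : ∀ j, a j ≤ 1) (hai : a i = 0) :
    |∑ j, (1 - a j) * sin (x i - x j)| ≤ (Fintype.card ι - 1) - ∑ j, a j := by
  have hterm : ∀ j, |(1 - a j) * sin (x i - x j)| ≤ 1 - a j := fun j => by
    rw [abs_mul, abs_of_nonneg (sub_nonneg.2 (ha j))]
    exact mul_le_of_le_one_right (sub_nonneg.2 (ha j)) (abs_sin_le_one _)
  -- the diagonal term vanishes because `sin 0 = 0`, which is what saves the `- 1`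
  calc |∑ j, (1 - a j) * sin (x i - x j)|
      = |∑ j ∈ univ.erase i, (1 - a j) * sin (x i - x j)| := by
        rw [← add_sum_erase _ _ (mem_univ i), sub_self, sin_zero, mul_zero, zero_add]
    _ ≤ ∑ j ∈ univ.erase i, (1 - a j) :=
        (abs_sum_le_sum_abs _ _).trans (sum_le_sum fun j _ => hterm j)
    _ = (Fintype.card ι - 1) - ∑ j, a j := by
        rw [sum_sub_distrib, sum_const, card_erase_of_mem (mem_univ i), card_univ,
          ← add_sum_erase _ _ (mem_univ i), hai, zero_add, nsmul_one,
          Nat.cast_sub (Fintype.card_pos_iff.2 ⟨i⟩)]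
        simp

lemma im_sum_exp_mul_exp_neg {ι : Type*} [Fintype ι] (x : ι → ℝ) (t : ℝ) :
    ((∑ j, Complex.exp ((x j : ℂ) * Complex.I)) * Complex.exp (-(t : ℂ) * Complex.I)).im =
      ∑ j, sin (x j - t) := by
  rw [sum_mul, Complex.im_sum]
  refine sum_congr rfl fun j _ => ?_
  rw [← Complex.exp_add, ← Complex.exp_ofReal_mul_I_im (x j - t)]
  push_cast
  ring_nf

lemma norm_mul_abs_sin_arg_sub (z : ℂ) (t : ℝ) :
    ‖z‖ * |sin (z.arg - t)| = |(z * Complex.exp (-(t : ℂ) * Complex.I)).im| := by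
  conv_rhs => rw [← Complex.norm_mul_exp_arg_mul_I z, mul_assoc, ← Complex.exp_add]
  rw [show (z.arg : ℂ) * Complex.I + -(t : ℂ) * Complex.I = ((z.arg - t : ℝ) : ℂ) * Complex.I by
    push_cast; ring, Complex.im_ofReal_mul, Complex.exp_ofReal_mul_I_im, abs_mul, abs_norm]

theorem equilibrium_first_order_bound_general
    (n : ℕ) (A : Matrix (Fin n) (Fin n) ℝ)
    (hA01 : ∀ i j, A i j = 0 ∨ A i j = 1) (hAdiag : ∀ i, A i i = 0)
    (μ : ℝ)
    (hdense : ∀ i, μ * ((n : ℝ) - 1) ≤ ∑ j, A i j)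
    (K : ℝ) (hK : 0 < K) (ω : Fin n → ℝ)
    (θ : Fin n → ℝ)
    (heq : ∀ i, (K / n) * ∑ j, A i j * Real.sin (θ i - θ j) = ω i) :
    ∀ i,
      |∑ j, Real.sin (θ j - θ i)| ≤ (n : ℝ) * K⁻¹ * ‖ω‖ + (1 - μ) * ((n : ℝ) - 1) ∧
      ‖∑ j, Complex.exp ((θ j : ℂ) * Complex.I)‖ *
          |Real.sin ((∑ j, Complex.exp ((θ j : ℂ) * Complex.I)).arg - θ i)| ≤
        (n : ℝ) * K⁻¹ * ‖ω‖ + (1 - μ) * ((n : ℝ) - 1) := by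
  intro i
  have hsplit : ∑ j, sin (θ j - θ i) =
      -(∑ j, A i j * sin (θ i - θ j) + ∑ j, (1 - A i j) * sin (θ i - θ j)) := by
    rw [← sum_add_distrib, ← sum_neg_distrib]
    refine sum_congr rfl fun j _ => ?_
    rw [← neg_sub, sin_neg]
    ring
  have hcoupled := abs_le_of_div_mul_eq (by exact_mod_cast i.pos) hK (heq i)
  have huncoupled := abs_sum_one_sub_mul_sin_sub_le (A i) θ i
    (fun j => by rcases hA01 i j with h | h <;> simp [h]) (hAdiag i)
  rw [Fintype.card_fin] at huncoupled
  have hω : n * K⁻¹ * |ω i| ≤ n * K⁻¹ * ‖ω‖ :=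
    mul_le_mul_of_nonneg_left (norm_le_pi_norm ω i) (by positivity)
  have key : |∑ j, sin (θ j - θ i)| ≤ n * K⁻¹ * ‖ω‖ + (1 - μ) * (n - 1) := by
    rw [hsplit, abs_neg]
    linarith [abs_add_le (∑ j, A i j * sin (θ i - θ j)) (∑ j, (1 - A i j) * sin (θ i - θ j)),
      hdense i]
  refine ⟨key, ?_⟩
  rwa [norm_mul_abs_sin_arg_sub, im_sum_exp_mul_exp_neg]

/-- At any equilibrium of the Kuramoto model on a μ-dense network, for every index `i`,
`|Σ_j sin(θ_j − θ_i)| ≤ n K⁻¹ ‖ω‖_∞ + (1 − μ)(n − 1)`; equivalently, writing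
`r(θ) = Σ_j e^{iθ_j} = |r| e^{iψ}`, one has
`|r(θ)|·|sin(ψ − θ_i)| ≤ n K⁻¹ ‖ω‖_∞ + (1 − μ)(n − 1)`. -/
theorem equilibrium_first_order_bound
    (n : ℕ) (hn : 2 ≤ n) (A : Matrix (Fin n) (Fin n) ℝ)
    (hA01 : ∀ i j, A i j = 0 ∨ A i j = 1) (hAsym : A.IsSymm) (hAdiag : ∀ i, A i i = 0)
    (μ : ℝ) (hμ0 : 0 ≤ μ) (hμ1 : μ ≤ 1)
    (hdense : ∀ i, μ * ((n : ℝ) - 1) ≤ ∑ j, A i j)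
    (K : ℝ) (hK : 0 < K) (ω : Fin n → ℝ)
    (θ : Fin n → ℝ)
    (heq : ∀ i, (K / n) * ∑ j, A i j * Real.sin (θ i - θ j) = ω i) :
    ∀ i,
      |∑ j, Real.sin (θ j - θ i)| ≤ (n : ℝ) * K⁻¹ * ‖ω‖ + (1 - μ) * ((n : ℝ) - 1) ∧
      ‖∑ j, Complex.exp ((θ j : ℂ) * Complex.I)‖ *
          |Real.sin ((∑ j, Complex.exp ((θ j : ℂ) * Complex.I)).arg - θ i)| ≤
        (n : ℝ) * K⁻¹ * ‖ω‖ + (1 - μ) * ((n : ℝ) - 1) :=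
  equilibrium_first_order_bound_general n A hA01 hAdiag μ hdense K hK ω θ heq
end
end

section
/- Let A = (a_ij) ∈ {0,1}^{n×n} be the symmetric adjacency matrix (zero diagonal) of a μ-dense network, K > 0, and ω ∈ ℝⁿ. Let θ ∈ ℝⁿ and let i ≠ j be indices such that θⱼ ≤ θ_k ≤ θᵢ for all k, with γ := θᵢ − θⱼ satisfying 0 < γ ≤ π/2. Then the difference of the Kuramoto vector fields at i and j satisfies (ωᵢ − (K/n) Σ_k a_ik sin(θᵢ − θ_k)) − (ωⱼ − (K/n) Σ_k a_jk sin(θⱼ − θ_k)) ≤ (maxₖ ωₖ − minₖ ωₖ) − (2μ − 1) K sin(γ). -/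
/-!
Write `γ = θᵢ - θⱼ`. By `sin (-x) = -sin x` the coupling difference is
`∑ₖ (aᵢₖ sin (θᵢ - θₖ) + aⱼₖ sin (θₖ - θⱼ))`, where both angles lie in `[0, γ]`. Since `sin` is
subadditive on `[0, π]`, the `k`-th term is at least `(aᵢₖ + aⱼₖ - 1) sin γ`, and for `k = i, j` it
exceeds this bound by exactly `sin γ`. Summing, the coupling difference is at least
`(deg i + deg j - n + 2) sin γ ≥ (2μ(n - 1) - n + 2) sin γ ≥ (2μ - 1) n sin γ`.
-/

open Real Finset

theorem Real.sin_add_le_sin_add_sin {a b : ℝ} (ha : 0 ≤ a) (ha' : a ≤ π) (hb : 0 ≤ b)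
    (hb' : b ≤ π) : sin (a + b) ≤ sin a + sin b := by
  rw [sin_add]
  gcongr
  · exact mul_le_of_le_one_right (sin_nonneg_of_nonneg_of_le_pi ha ha') (cos_le_one b)
  · exact mul_le_of_le_one_left (sin_nonneg_of_nonneg_of_le_pi hb hb') (cos_le_one a)

theorem add_sub_one_mul_le_mul_add_mul {a b x y s : ℝ} (ha : a ∈ Set.Icc 0 1)
    (hb : b ∈ Set.Icc 0 1) (hx : 0 ≤ x) (hy : 0 ≤ y) (hs : 0 ≤ s) (hsxy : s ≤ x + y) :
    (a + b - 1) * s ≤ a * x + b * y := by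
  obtain ⟨ha0, ha1⟩ := ha
  obtain ⟨hb0, hb1⟩ := hb
  -- for `a ≤ b` the difference is `a (x + y - s) + (b - a) y + (1 - b) s`
  rcases le_total a b with hab | hba
  · nlinarith [mul_nonneg ha0 (sub_nonneg.2 hsxy), mul_nonneg (sub_nonneg.2 hab) hy,
      mul_nonneg (sub_nonneg.2 hb1) hs]
  · nlinarith [mul_nonneg hb0 (sub_nonneg.2 hsxy), mul_nonneg (sub_nonneg.2 hba) hx,
      mul_nonneg (sub_nonneg.2 ha1) hs]

section Coupling

variable {ι : Type*} [Fintype ι] [DecidableEq ι] {A : Matrix ι ι ℝ} {θ : ι → ℝ} {i j : ι}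

theorem sum_coupling_pair_ge (hA : ∀ k l, A k l ∈ Set.Icc 0 1) (hAsym : A.IsSymm)
    (hAdiag : ∀ k, A k k = 0) (hij : i ≠ j) (hmax : ∀ k, θ k ≤ θ i) (hmin : ∀ k, θ j ≤ θ k)
    (hγ : θ i - θ j ≤ π) :
    (∑ k, A i k + ∑ k, A j k - Fintype.card ι + 2) * sin (θ i - θ j) ≤
      ∑ k, (A i k * sin (θ i - θ k) + A j k * sin (θ k - θ j)) := by
  set s := sin (θ i - θ j)
  have hs : 0 ≤ s := sin_nonneg_of_nonneg_of_le_pi (by linarith [hmin i]) hγ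
  set g : ι → ℝ := fun k ↦
    A i k * sin (θ i - θ k) + A j k * sin (θ k - θ j) - (A i k + A j k - 1) * s
  have hg : ∀ k, 0 ≤ g k := fun k ↦ by
    have hik : θ i - θ k ∈ Set.Icc 0 π := ⟨by linarith [hmax k], by linarith [hmin k]⟩
    have hkj : θ k - θ j ∈ Set.Icc 0 π := ⟨by linarith [hmin k], by linarith [hmax k]⟩
    have hsplit := sin_add_le_sin_add_sin hik.1 hik.2 hkj.1 hkj.2
    rw [sub_add_sub_cancel] at hsplit
    exact sub_nonneg.2 <| add_sub_one_mul_le_mul_add_mul (hA i k) (hA j k)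
      (sin_nonneg_of_nonneg_of_le_pi hik.1 hik.2) (sin_nonneg_of_nonneg_of_le_pi hkj.1 hkj.2) hs
      hsplit
  have hgi : g i = s := by simp only [g, hAdiag, hAsym.apply i j, sub_self, sin_zero]; ring
  have hgj : g j = s := by simp only [g, hAdiag, sub_self, sin_zero]; ring
  have hpair : g i + g j ≤ ∑ k, g k := by
    rw [← sum_pair hij]
    exact sum_le_sum_of_subset_of_nonneg (subset_univ _) fun k _ _ ↦ hg k
  have hsum_g : ∑ k, g k = ∑ k, (A i k * sin (θ i - θ k) + A j k * sin (θ k - θ j)) -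
      (∑ k, A i k + ∑ k, A j k - Fintype.card ι) * s := by
    simp [g, sum_sub_distrib, sum_add_distrib, ← sum_mul]
  linarith

theorem coupling_sub_ge_of_dense {μ : ℝ} (hA : ∀ k l, A k l ∈ Set.Icc 0 1) (hAsym : A.IsSymm)
    (hAdiag : ∀ k, A k k = 0) (hμ1 : μ ≤ 1)
    (hdense : ∀ k, μ * ((Fintype.card ι : ℝ) - 1) ≤ ∑ l, A k l) (hij : i ≠ j)
    (hmax : ∀ k, θ k ≤ θ i) (hmin : ∀ k, θ j ≤ θ k) (hγ : θ i - θ j ≤ π) :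
    (2 * μ - 1) * Fintype.card ι * sin (θ i - θ j) ≤
      ∑ k, A i k * sin (θ i - θ k) - ∑ k, A j k * sin (θ j - θ k) := by
  have hs : 0 ≤ sin (θ i - θ j) := sin_nonneg_of_nonneg_of_le_pi (by linarith [hmin i]) hγ
  have hdeg : (2 * μ - 1) * Fintype.card ι ≤ ∑ k, A i k + ∑ k, A j k - Fintype.card ι + 2 := by
    linarith [hdense i, hdense j]
  have hdiff : ∑ k, A i k * sin (θ i - θ k) - ∑ k, A j k * sin (θ j - θ k) =
      ∑ k, (A i k * sin (θ i - θ k) + A j k * sin (θ k - θ j)) := by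
    rw [sub_eq_add_neg, ← sum_neg_distrib, ← sum_add_distrib]
    refine sum_congr rfl fun k _ ↦ ?_
    rw [← neg_sub (θ k) (θ j), sin_neg]
    ring
  rw [hdiff]
  exact (mul_le_mul_of_nonneg_right hdeg hs).trans
    (sum_coupling_pair_ge hA hAsym hAdiag hij hmax hmin hγ)

end Coupling

theorem vector_field_difference_bound_general
    (n : ℕ) (A : Matrix (Fin n) (Fin n) ℝ)
    (hA01 : ∀ i j, A i j = 0 ∨ A i j = 1) (hAsym : A.IsSymm) (hAdiag : ∀ i, A i i = 0)
    (μ : ℝ) (hμ1 : μ ≤ 1)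
    (hdense : ∀ i, μ * ((n : ℝ) - 1) ≤ ∑ j, A i j)
    (K : ℝ) (hK : 0 < K) (ω : Fin n → ℝ)
    (θ : Fin n → ℝ) (i j : Fin n) (hij : i ≠ j)
    (hmax : ∀ k, θ k ≤ θ i) (hmin : ∀ k, θ j ≤ θ k)
    (hγle : θ i - θ j ≤ π / 2) :
    (ω i - (K / n) * ∑ k, A i k * Real.sin (θ i - θ k)) -
        (ω j - (K / n) * ∑ k, A j k * Real.sin (θ j - θ k)) ≤
      (Finset.univ.sup' ⟨i, Finset.mem_univ i⟩ ω -
          Finset.univ.inf' ⟨i, Finset.mem_univ i⟩ ω) -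
        (2 * μ - 1) * K * Real.sin (θ i - θ j) := by
  have hA : ∀ k l, A k l ∈ Set.Icc 0 1 := fun k l ↦ by rcases hA01 k l with h | h <;> simp [h]
  have hcoupling := coupling_sub_ge_of_dense hA hAsym hAdiag hμ1 (by simpa using hdense) hij
    hmax hmin (by linarith [pi_pos])
  have hn : (0 : ℝ) < n := by exact_mod_cast i.pos
  have hscaled : (2 * μ - 1) * K * sin (θ i - θ j) ≤
      K / n * (∑ k, A i k * sin (θ i - θ k) - ∑ k, A j k * sin (θ j - θ k)) := by
    calc (2 * μ - 1) * K * sin (θ i - θ j)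
        = K / n * ((2 * μ - 1) * n * sin (θ i - θ j)) := by field_simp
      _ ≤ _ := by gcongr; simpa using hcoupling
  have hωi : ω i ≤ univ.sup' ⟨i, mem_univ i⟩ ω := le_sup' ω (mem_univ i)
  have hωj : univ.inf' ⟨i, mem_univ i⟩ ω ≤ ω j := inf'_le ω (mem_univ j)
  linarith

/-- If `θ_i` is the largest phase and `θ_j` the smallest, with range `γ = θ_i − θ_j ∈ (0, π/2]`,
then the difference of the Kuramoto vector fields at `i` and `j` is at most
`(max_k ω_k − min_k ω_k) − (2μ − 1) K sin γ` on a μ-dense network. -/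
theorem vector_field_difference_bound
    (n : ℕ) (hn : 2 ≤ n) (A : Matrix (Fin n) (Fin n) ℝ)
    (hA01 : ∀ i j, A i j = 0 ∨ A i j = 1) (hAsym : A.IsSymm) (hAdiag : ∀ i, A i i = 0)
    (μ : ℝ) (hμ0 : 0 ≤ μ) (hμ1 : μ ≤ 1)
    (hdense : ∀ i, μ * ((n : ℝ) - 1) ≤ ∑ j, A i j)
    (K : ℝ) (hK : 0 < K) (ω : Fin n → ℝ)
    (θ : Fin n → ℝ) (i j : Fin n) (hij : i ≠ j)
    (hmax : ∀ k, θ k ≤ θ i) (hmin : ∀ k, θ j ≤ θ k)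
    (hγpos : 0 < θ i - θ j) (hγle : θ i - θ j ≤ π / 2) :
    (ω i - (K / n) * ∑ k, A i k * Real.sin (θ i - θ k)) -
        (ω j - (K / n) * ∑ k, A j k * Real.sin (θ j - θ k)) ≤
      (Finset.univ.sup' ⟨i, Finset.mem_univ i⟩ ω -
          Finset.univ.inf' ⟨i, Finset.mem_univ i⟩ ω) -
        (2 * μ - 1) * K * Real.sin (θ i - θ j) :=
  vector_field_difference_bound_general n A hA01 hAsym hAdiag μ hμ1 hdense K hK ω θ i j hij hmax
    hmin hγle
end

section
/- Consider the Kuramoto model on a connected network with symmetric adjacency matrix A ∈ {0,1}^{n×n}, coupling K > 0, and frequencies ω ∈ ℝⁿ with Σᵢ ωᵢ = 0. Let 0 < γ < π/2 and let θ : [0, ∞) → ℝⁿ be a twice-differentiable solution of θ̇ᵢ(t) = ωᵢ − (K/n) Σⱼ a_ij sin(θᵢ(t) − θⱼ(t)) that satisfies θ(t) ∈ Δ(γ) for all t ≥ 0. Then ‖θ̇(t)‖² ≤ exp(−2 n⁻¹ K cos(γ) λ₂(L) · t) · ‖θ̇(0)‖² for all t ≥ 0, where λ₂(L) > 0 is the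 second smallest eigenvalue of the graph Laplacian L. In particular ‖θ̇(t)‖ → 0 exponentially fast, i.e., the oscillators achieve exponential frequency synchronization. -/
open Real Finset

noncomputable section

/-- The second smallest eigenvalue of a symmetric matrix having `𝟙` in its kernel,
via the Courant–Fischer variational characterization. -/
def lambda2 {n : ℕ} (M : Matrix (Fin n) (Fin n) ℝ) : ℝ :=
  sInf { x : ℝ | ∃ v : Fin n → ℝ, (∑ i, v i) = 0 ∧ (∑ i, (v i) ^ 2) = 1 ∧
    x = ∑ i, ∑ j, v i * M i j * v j }

/-!
Write f for the Kuramoto vector field, so θ̇ = f(θ) on [0, ∞). The frequency vector has zero sum,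
and the chain rule gives d/dt ‖f(θ)‖² = −(2K/n) θ̇ᵀ J(θ) θ̇. Since
θ̇ᵀ J(θ) θ̇ = ½ Σ aᵢⱼ cos(θᵢ − θⱼ)(θ̇ᵢ − θ̇ⱼ)² and every cos(θᵢ − θⱼ) is at least cos γ > 0 on Δ(γ),
this form dominates cos γ · θ̇ᵀ L θ̇ ≥ cos γ · λ₂(L) ‖θ̇‖² (Courant–Fischer on 𝟙⊥), and Grönwall's
inequality gives the exponential decay.
The infimum defining λ₂(L) is attained on the compact set {v ⊥ 𝟙, ‖v‖ = 1}; a minimiser is not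
constant, hence by connectivity differs across some edge, which makes ½ Σ aᵢⱼ (vᵢ − vⱼ)² > 0.
-/

lemma sum_sum_eq_zero_of_antisymm {ι : Type*} [Fintype ι] {c : ι → ι → ℝ}
    (hc : ∀ i j, c j i = -c i j) : ∑ i, ∑ j, c i j = 0 := by
  have h : ∑ i, ∑ j, c i j = -∑ i, ∑ j, c i j := by
    conv_lhs => rw [sum_comm]
    rw [← sum_neg_distrib]
    exact sum_congr rfl fun i _ => by
      rw [← sum_neg_distrib]
      exact sum_congr rfl fun j _ => hc i j
  linarith

lemma sum_mul_sum_sub_eq_half_sum_sq {ι : Type*} [Fintype ι] {c : ι → ι → ℝ}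
    (hc : ∀ i j, c j i = c i j) (v : ι → ℝ) :
    ∑ i, v i * ∑ j, c i j * (v i - v j) = (∑ i, ∑ j, c i j * (v i - v j) ^ 2) / 2 := by
  have hleft : ∑ i, v i * ∑ j, c i j * (v i - v j) = ∑ i, ∑ j, c i j * (v i - v j) * v i := by
    simp only [mul_sum]
    exact sum_congr rfl fun i _ => sum_congr rfl fun j _ => by ring
  have hsq : ∑ i, ∑ j, c i j * (v i - v j) ^ 2 =
      ∑ i, ∑ j, c i j * (v i - v j) * v i - ∑ i, ∑ j, c i j * (v i - v j) * v j := by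
    rw [← sum_sub_distrib]
    exact sum_congr rfl fun i _ => by
      rw [← sum_sub_distrib]
      exact sum_congr rfl fun j _ => by ring
  have hswap : ∑ i, ∑ j, c i j * (v i - v j) * v j = -∑ i, ∑ j, c i j * (v i - v j) * v i := by
    rw [sum_comm, ← sum_neg_distrib]
    exact sum_congr rfl fun i _ => by
      rw [← sum_neg_distrib]
      exact sum_congr rfl fun j _ => by rw [hc]; ring
  rw [hleft, hsq, hswap]
  ring

lemma SimpleGraph.Connected.exists_adj_ne {V α : Type*} {G : SimpleGraph V} (hG : G.Connected)
    {f : V → α} {i j : V} (hij : f i ≠ f j) : ∃ a b, G.Adj a b ∧ f a ≠ f b := by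
  obtain ⟨d, -, hd, hd'⟩ :=
    (hG.preconnected i j).some.exists_boundary_dart {k | f k = f i} rfl hij.symm
  exact ⟨d.fst, d.snd, d.adj, fun h => hd' (h.symm.trans hd)⟩

lemma le_exp_mul_of_hasDerivAt_le_mul {f f' : ℝ → ℝ} {c : ℝ}
    (hf : ∀ t, 0 ≤ t → HasDerivAt f (f' t) t) (hbound : ∀ t, 0 ≤ t → f' t ≤ c * f t)
    {t : ℝ} (ht : 0 ≤ t) : f t ≤ exp (c * t) * f 0 := by
  have h := le_gronwallBound_of_liminf_deriv_right_le (δ := f 0) (ε := 0) (a := 0) (b := t)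
    (fun x hx => (hf x hx.1).continuousAt.continuousWithinAt)
    (fun x hx _ hr => (hf x hx.1).hasDerivWithinAt.liminf_right_slope_le hr)
    le_rfl (fun x hx => by simpa using hbound x hx.1) t ⟨ht, le_rfl⟩
  rwa [gronwallBound_ε0, sub_zero, mul_comm] at h

section Lambda2

variable {n : ℕ}

def quadForm (M : Matrix (Fin n) (Fin n) ℝ) (v : Fin n → ℝ) : ℝ :=
  ∑ i, ∑ j, v i * M i j * v j

lemma quadForm_smul (M : Matrix (Fin n) (Fin n) ℝ) (c : ℝ) (v : Fin n → ℝ) :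
    quadForm M (c • v) = c ^ 2 * quadForm M v := by
  simp only [quadForm, Pi.smul_apply, smul_eq_mul, mul_sum]
  exact sum_congr rfl fun i _ => sum_congr rfl fun j _ => by ring

lemma continuous_quadForm (M : Matrix (Fin n) (Fin n) ℝ) : Continuous (quadForm M) := by
  unfold quadForm
  fun_prop

def meanZeroSphere (n : ℕ) : Set (Fin n → ℝ) :=
  {v | ∑ i, v i = 0 ∧ ∑ i, v i ^ 2 = 1}

lemma isCompact_meanZeroSphere : IsCompact (meanZeroSphere n) := by
  refine Metric.isCompact_of_isClosed_isBounded
    ((isClosed_eq (by fun_prop) continuous_const).inter (isClosed_eq (by fun_prop) continuous_const))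
    ((Metric.isBounded_closedBall (x := 0) (r := 1)).subset fun v hv => ?_)
  rw [mem_closedBall_zero_iff, pi_norm_le_iff_of_nonneg zero_le_one]
  intro i
  rw [Real.norm_eq_abs, ← sq_le_one_iff_abs_le_one, ← hv.2]
  exact single_le_sum (f := fun k => v k ^ 2) (fun k _ => sq_nonneg _) (mem_univ i)

lemma inv_sqrt_smul_mem_meanZeroSphere {v : Fin n → ℝ} (hv : ∑ i, v i = 0)
    (hv0 : 0 < ∑ i, v i ^ 2) : (√(∑ i, v i ^ 2))⁻¹ • v ∈ meanZeroSphere n := by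
  constructor
  · simp [← mul_sum, hv]
  · simp only [Pi.smul_apply, smul_eq_mul, mul_pow, ← mul_sum, inv_pow, sq_sqrt hv0.le]
    exact inv_mul_cancel₀ hv0.ne'

lemma meanZeroSphere_nonempty (hn : 2 ≤ n) : (meanZeroSphere n).Nonempty := by
  set i₀ : Fin n := ⟨0, by omega⟩
  set v : Fin n → ℝ := Pi.single i₀ 1 - Pi.single ⟨1, by omega⟩ 1
  have hv₀ : v i₀ = 1 := by simp [v, i₀]
  refine ⟨_, inv_sqrt_smul_mem_meanZeroSphere (v := v) (by simp [v]) ?_⟩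
  calc (0 : ℝ) < v i₀ ^ 2 := by simp [hv₀]
    _ ≤ ∑ i, v i ^ 2 := single_le_sum (f := fun k => v k ^ 2) (fun k _ => sq_nonneg _) (mem_univ i₀)

lemma exists_ne_of_mem_meanZeroSphere {v : Fin n → ℝ} (hv : v ∈ meanZeroSphere n) :
    ∃ i j, v i ≠ v j := by
  by_contra! hconst
  have hsq : ∑ i, v i ^ 2 = 0 := by
    rcases isEmpty_or_nonempty (Fin n) with _ | ⟨⟨i₀⟩⟩
    · simp
    · calc ∑ i, v i ^ 2 = (∑ i, v i) * v i₀ := by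
            rw [sum_mul]
            exact sum_congr rfl fun i _ => by rw [sq, hconst i i₀]
        _ = 0 := by rw [hv.1, zero_mul]
  linarith [hv.2]

lemma lambda2_eq_sInf_image (M : Matrix (Fin n) (Fin n) ℝ) :
    lambda2 M = sInf (quadForm M '' meanZeroSphere n) := by
  simp [lambda2, meanZeroSphere, quadForm, Set.image, eq_comm, and_assoc]

lemma isCompact_image_quadForm (M : Matrix (Fin n) (Fin n) ℝ) :
    IsCompact (quadForm M '' meanZeroSphere n) :=
  isCompact_meanZeroSphere.image (continuous_quadForm M)

lemma lambda2_le_quadForm (M : Matrix (Fin n) (Fin n) ℝ) {v : Fin n → ℝ}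
    (hv : v ∈ meanZeroSphere n) : lambda2 M ≤ quadForm M v := by
  rw [lambda2_eq_sInf_image]
  exact csInf_le (isCompact_image_quadForm M).bddBelow ⟨v, hv, rfl⟩

lemma exists_quadForm_eq_lambda2 (M : Matrix (Fin n) (Fin n) ℝ) (hn : 2 ≤ n) :
    ∃ v ∈ meanZeroSphere n, quadForm M v = lambda2 M := by
  rw [lambda2_eq_sInf_image]
  exact (isCompact_image_quadForm M).sInf_mem ((meanZeroSphere_nonempty hn).image _)

lemma lambda2_mul_sum_sq_le_quadForm (M : Matrix (Fin n) (Fin n) ℝ) {v : Fin n → ℝ}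
    (hv : ∑ i, v i = 0) : lambda2 M * ∑ i, v i ^ 2 ≤ quadForm M v := by
  rcases (sum_nonneg fun i _ => sq_nonneg (v i)).eq_or_lt with h0 | hpos
  · have hv0 : v = 0 := funext fun i => by
      simpa using congrFun ((Fintype.sum_eq_zero_iff_of_nonneg fun i => sq_nonneg (v i)).1 h0.symm) i
    simp [hv0, quadForm]
  · have h := lambda2_le_quadForm M (inv_sqrt_smul_mem_meanZeroSphere hv hpos)
    rwa [quadForm_smul, inv_pow, sq_sqrt hpos.le, ← div_eq_inv_mul, le_div_iff₀ hpos] at h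

end Lambda2

section Kuramoto

variable {n : ℕ} (A : Matrix (Fin n) (Fin n) ℝ)

lemma quadForm_kuraJ (hAdiag : ∀ i, A i i = 0) (φ v : Fin n → ℝ) :
    quadForm (kuraJ A φ) v = ∑ i, v i * ∑ j, A i j * cos (φ i - φ j) * (v i - v j) := by
  have hJ : ∀ i j, kuraJ A φ i j =
      (if i = j then ∑ k, A i k * cos (φ i - φ k) else 0) - A i j * cos (φ i - φ j) := by
    intro i j
    by_cases h : i = j
    · subst h
      simp [kuraJ, hAdiag]
    · simp [kuraJ, h]
  refine sum_congr rfl fun i _ => ?_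
  simp only [hJ, mul_sub, sub_mul, sum_sub_distrib, mul_ite, ite_mul, mul_zero, zero_mul,
    sum_ite_eq, mem_univ, if_true, mul_sum]
  rw [sum_mul, ← sum_sub_distrib, ← sum_sub_distrib]
  exact sum_congr rfl fun j _ => by ring

lemma quadForm_kuraJ_eq_half_sum (hAsym : A.IsSymm) (hAdiag : ∀ i, A i i = 0)
    (φ v : Fin n → ℝ) :
    quadForm (kuraJ A φ) v = (∑ i, ∑ j, A i j * cos (φ i - φ j) * (v i - v j) ^ 2) / 2 := by
  rw [quadForm_kuraJ A hAdiag, sum_mul_sum_sub_eq_half_sum_sq]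
  intro i j
  rw [hAsym.apply i j, ← cos_neg, neg_sub]

lemma lambda2_kuraJ_zero_pos (hn : 2 ≤ n) (hA0 : ∀ i j, 0 ≤ A i j) (hAsym : A.IsSymm)
    (hAdiag : ∀ i, A i i = 0) (hconn : (SimpleGraph.fromRel fun i j => A i j = 1).Connected) :
    0 < lambda2 (kuraJ A fun _ => 0) := by
  obtain ⟨v, hv, hQ⟩ := exists_quadForm_eq_lambda2 (kuraJ A fun _ => 0) hn
  obtain ⟨i, j, hij⟩ := exists_ne_of_mem_meanZeroSphere hv
  obtain ⟨a, b, hab, hvab⟩ := hconn.exists_adj_ne hij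
  have hAab : A a b = 1 := by
    rcases (SimpleGraph.fromRel_adj _ a b).1 hab with ⟨-, h | h⟩
    · exact h
    · rwa [hAsym.apply] at h
  have hterm : ∀ i j, 0 ≤ A i j * (v i - v j) ^ 2 := fun i j => by
    have := hA0 i j
    positivity
  have hpos : 0 < ∑ i, ∑ j, A i j * (v i - v j) ^ 2 :=
    calc 0 < A a b * (v a - v b) ^ 2 := by
          have := sub_ne_zero.2 hvab
          rw [hAab, one_mul]
          positivity
      _ ≤ ∑ j, A a j * (v a - v j) ^ 2 :=
          single_le_sum (f := fun j => A a j * (v a - v j) ^ 2) (fun j _ => hterm a j) (mem_univ b)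
      _ ≤ ∑ i, ∑ j, A i j * (v i - v j) ^ 2 :=
          single_le_sum (f := fun i => ∑ j, A i j * (v i - v j) ^ 2)
            (fun i _ => sum_nonneg fun j _ => hterm i j) (mem_univ a)
  rw [← hQ, quadForm_kuraJ_eq_half_sum A hAsym hAdiag]
  simp only [sub_self, cos_zero, mul_one]
  positivity

lemma cos_mul_quadForm_kuraJ_zero_le (hA0 : ∀ i j, 0 ≤ A i j) (hAsym : A.IsSymm)
    (hAdiag : ∀ i, A i i = 0) {γ : ℝ} (hγπ : γ ≤ π) {φ : Fin n → ℝ}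
    (hφ : ∀ i j, i ≠ j → |φ i - φ j| ≤ γ) (v : Fin n → ℝ) :
    cos γ * quadForm (kuraJ A fun _ => 0) v ≤ quadForm (kuraJ A φ) v := by
  simp only [quadForm_kuraJ_eq_half_sum A hAsym hAdiag, sub_self, cos_zero, mul_one,
    mul_div_assoc', mul_sum]
  refine div_le_div_of_nonneg_right (sum_le_sum fun i _ => sum_le_sum fun j _ => ?_) two_pos.le
  by_cases hij : i = j
  · simp [hij]
  · have hcos : cos γ ≤ cos (φ i - φ j) := by
      rw [← cos_abs (φ i - φ j)]
      exact cos_le_cos_of_nonneg_of_le_pi (abs_nonneg _) hγπ (hφ i j hij)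
    calc cos γ * (A i j * (v i - v j) ^ 2) ≤ cos (φ i - φ j) * (A i j * (v i - v j) ^ 2) :=
          mul_le_mul_of_nonneg_right hcos (mul_nonneg (hA0 i j) (sq_nonneg _))
      _ = A i j * cos (φ i - φ j) * (v i - v j) ^ 2 := by ring

lemma cos_mul_lambda2_mul_sum_sq_le_quadForm_kuraJ (hA0 : ∀ i j, 0 ≤ A i j)
    (hAsym : A.IsSymm) (hAdiag : ∀ i, A i i = 0) {γ : ℝ} (hγ0 : 0 ≤ γ) (hγ : γ ≤ π / 2)
    {φ : Fin n → ℝ} (hφ : ∀ i j, i ≠ j → |φ i - φ j| ≤ γ) {v : Fin n → ℝ} (hv : ∑ i, v i = 0) :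
    cos γ * lambda2 (kuraJ A fun _ => 0) * ∑ i, v i ^ 2 ≤ quadForm (kuraJ A φ) v :=
  calc cos γ * lambda2 (kuraJ A fun _ => 0) * ∑ i, v i ^ 2
      = cos γ * (lambda2 (kuraJ A fun _ => 0) * ∑ i, v i ^ 2) := mul_assoc _ _ _
    _ ≤ cos γ * quadForm (kuraJ A fun _ => 0) v :=
        mul_le_mul_of_nonneg_left (lambda2_mul_sum_sq_le_quadForm _ hv)
          (cos_nonneg_of_mem_Icc ⟨by linarith [pi_pos], hγ⟩)
    _ ≤ quadForm (kuraJ A φ) v :=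
        cos_mul_quadForm_kuraJ_zero_le A hA0 hAsym hAdiag (by linarith [pi_pos]) hφ v

def kuramotoField (K : ℝ) (ω θ : Fin n → ℝ) : Fin n → ℝ :=
  fun i => ω i - (K / n) * ∑ j, A i j * sin (θ i - θ j)

lemma sum_kuramotoField (hAsym : A.IsSymm) {ω : Fin n → ℝ} (hω : ∑ i, ω i = 0)
    (K : ℝ) (θ : Fin n → ℝ) : ∑ i, kuramotoField A K ω θ i = 0 := by
  have hcoupling : ∑ i, ∑ j, A i j * sin (θ i - θ j) = 0 :=
    sum_sum_eq_zero_of_antisymm fun i j => by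
      rw [hAsym.apply, show θ j - θ i = -(θ i - θ j) by ring, sin_neg, mul_neg]
  simp only [kuramotoField, sum_sub_distrib, ← mul_sum, hω, hcoupling, mul_zero, sub_zero]

lemma hasDerivAt_kuramotoField_comp {K : ℝ} {ω : Fin n → ℝ} {θ : ℝ → Fin n → ℝ}
    {θ' : Fin n → ℝ} {t : ℝ} (hθ : ∀ i, HasDerivAt (fun s => θ s i) (θ' i) t) (i : Fin n) :
    HasDerivAt (fun s => kuramotoField A K ω (θ s) i)
      (-(K / n) * ∑ j, A i j * cos (θ t i - θ t j) * (θ' i - θ' j)) t := by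
  refine ((hasDerivAt_const t (ω i)).fun_sub ((HasDerivAt.fun_sum (u := univ) fun j _ =>
    ((hθ i).fun_sub (hθ j)).sin.const_mul (A i j)).const_mul (K / n))).congr_deriv ?_
  simp only [zero_sub, mul_assoc, neg_mul]

lemma hasDerivAt_sum_sq_kuramotoField (hAdiag : ∀ i, A i i = 0) {K : ℝ} {ω : Fin n → ℝ}
    {θ : ℝ → Fin n → ℝ} {t : ℝ}
    (hθ : ∀ i, HasDerivAt (fun s => θ s i) (kuramotoField A K ω (θ t) i) t) :
    HasDerivAt (fun s => ∑ i, kuramotoField A K ω (θ s) i ^ 2)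
      (-(2 * K / n) * quadForm (kuraJ A (θ t)) (kuramotoField A K ω (θ t))) t := by
  refine (HasDerivAt.fun_sum (u := univ) fun i _ =>
    (hasDerivAt_kuramotoField_comp A hθ i).fun_pow 2).congr_deriv ?_
  rw [quadForm_kuraJ A hAdiag, mul_sum]
  exact sum_congr rfl fun i _ => by push_cast; ring

end Kuramoto

theorem exponential_frequency_synchronization_general
    (n : ℕ) (hn : 2 ≤ n) (A : Matrix (Fin n) (Fin n) ℝ)
    (hA01 : ∀ i j, A i j = 0 ∨ A i j = 1) (hAsym : A.IsSymm) (hAdiag : ∀ i, A i i = 0)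
    (hconn : (SimpleGraph.fromRel fun i j => A i j = 1).Connected)
    (K : ℝ) (hK : 0 < K) (ω : Fin n → ℝ) (hω : ∑ i, ω i = 0)
    (γ : ℝ) (hγ0 : 0 < γ) (hγ : γ < π / 2)
    (θ dθ : ℝ → Fin n → ℝ)
    (hderiv : ∀ t, 0 ≤ t → ∀ i, HasDerivAt (fun s => θ s i) (dθ t i) t)
    (hode : ∀ t, 0 ≤ t → ∀ i,
      dθ t i = ω i - (K / n) * ∑ j, A i j * Real.sin (θ t i - θ t j))
    (hcoh : ∀ t, 0 ≤ t → ∀ i j, i ≠ j → |θ t i - θ t j| < γ) :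
    0 < lambda2 (kuraJ A (fun _ => 0)) ∧
    ∀ t, 0 ≤ t →
      ∑ i, (dθ t i) ^ 2 ≤
        Real.exp (-2 * (n : ℝ)⁻¹ * K * Real.cos γ * lambda2 (kuraJ A (fun _ => 0)) * t) *
          ∑ i, (dθ 0 i) ^ 2 := by
  have hA0 : ∀ i j, 0 ≤ A i j := fun i j => by rcases hA01 i j with h | h <;> simp [h]
  refine ⟨lambda2_kuraJ_zero_pos A hn hA0 hAsym hAdiag hconn, fun t ht => ?_⟩
  have hdθ : ∀ s, 0 ≤ s → dθ s = kuramotoField A K ω (θ s) := fun s hs => funext (hode s hs)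
  rw [hdθ t ht, hdθ 0 le_rfl]
  refine le_exp_mul_of_hasDerivAt_le_mul (fun s hs => hasDerivAt_sum_sq_kuramotoField A hAdiag
    fun i => hdθ s hs ▸ hderiv s hs i) (fun s hs => ?_) ht
  have hbound := cos_mul_lambda2_mul_sum_sq_le_quadForm_kuraJ A hA0 hAsym hAdiag hγ0.le hγ.le
    (fun i j hij => (hcoh s hs i j hij).le) (sum_kuramotoField A hAsym hω K (θ s))
  have hrate : -(2 * K / n) ≤ 0 := neg_nonpos.2 (by positivity)
  calc -(2 * K / n) * quadForm (kuraJ A (θ s)) (kuramotoField A K ω (θ s))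
      ≤ -(2 * K / n) * (cos γ * lambda2 (kuraJ A fun _ => 0) *
          ∑ i, kuramotoField A K ω (θ s) i ^ 2) := mul_le_mul_of_nonpos_left hbound hrate
    _ = _ := by ring

/-- Exponential frequency synchronization: if a (twice-differentiable) solution of the
Kuramoto model on a connected network stays in `Δ(γ)` with `γ < π/2`, then
`‖θ̇(t)‖² ≤ exp(−2n⁻¹K cos γ · λ₂(L) · t)·‖θ̇(0)‖²` for all `t ≥ 0`, where `λ₂(L) > 0` is the
second smallest eigenvalue of the graph Laplacian. -/
theorem exponential_frequency_synchronization
    (n : ℕ) (hn : 2 ≤ n) (A : Matrix (Fin n) (Fin n) ℝ)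
    (hA01 : ∀ i j, A i j = 0 ∨ A i j = 1) (hAsym : A.IsSymm) (hAdiag : ∀ i, A i i = 0)
    (hconn : (SimpleGraph.fromRel fun i j => A i j = 1).Connected)
    (K : ℝ) (hK : 0 < K) (ω : Fin n → ℝ) (hω : ∑ i, ω i = 0)
    (γ : ℝ) (hγ0 : 0 < γ) (hγ : γ < π / 2)
    (θ dθ : ℝ → Fin n → ℝ)
    (hderiv : ∀ t, 0 ≤ t → ∀ i, HasDerivAt (fun s => θ s i) (dθ t i) t)
    (hsmooth : ∀ t, 0 ≤ t → ∀ i, DifferentiableAt ℝ (fun s => dθ s i) t)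
    (hode : ∀ t, 0 ≤ t → ∀ i,
      dθ t i = ω i - (K / n) * ∑ j, A i j * Real.sin (θ t i - θ t j))
    (hcoh : ∀ t, 0 ≤ t → ∀ i j, i ≠ j → |θ t i - θ t j| < γ) :
    0 < lambda2 (kuraJ A (fun _ => 0)) ∧
    ∀ t, 0 ≤ t →
      ∑ i, (dθ t i) ^ 2 ≤
        Real.exp (-2 * (n : ℝ)⁻¹ * K * Real.cos γ * lambda2 (kuraJ A (fun _ => 0)) * t) *
          ∑ i, (dθ 0 i) ^ 2 :=
  exponential_frequency_synchronization_general n hn A hA01 hAsym hAdiag hconn K hK ω hω γ hγ0 hγ θ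
    dθ hderiv hode hcoh
end
end

section
/- Consider the homogeneous Kuramoto model (ωᵢ = 0 for all i) on a μ-dense network with μ > (3 − √2)/2 ≈ 0.7929 and coupling K > 0. Then every stable equilibrium is phase synchronized: if θ ∈ ℝⁿ satisfies Σⱼ a_ij sin(θᵢ − θⱼ) = 0 for all i and J(θ) is positive semidefinite, then θᵢ ≡ θⱼ (mod 2π) for all i, j. -/
open Real Finset

noncomputable section

/-!
Testing stability on `x = cos θ` and `x = sin θ` gives `∑ aᵢⱼ cos(θᵢ - θⱼ) (1 - cos(θᵢ - θⱼ)) ≥ 0`.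
If every vertex misses at most `δ = (1 - μ)(n - 1)` neighbours, comparing the sums over edges with
the sums over all pairs turns this into a lower bound `|Z|² ≥ n²/2 - 2nδ > 2δ²` for the order
parameter `Z = ∑ⱼ exp (I θⱼ)`. Comparing the same way, the equilibrium equation at `i` says that the
component of `|Z| exp (I θᵢ)` orthogonal to `Z` is at most `δ`, so every phase lies within `π/4` of
`arg Z` or of `arg Z + π`. Two phases near opposite ends have negative `cos (θᵢ - θⱼ)`, so stability
tested on the indicator of one cluster leaves no edge between the clusters; but minimum degree above
`(n - 2)/2` makes the graph connected, and `Re ∑ⱼ conj Z exp (I θⱼ) = |Z|² > 0`, so all phases are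
near `arg Z`. On that open half circle, a vertex of largest phase is at equilibrium only if all its
neighbours share its phase, and connectivity spreads this to every vertex.
-/

open Matrix

variable {ι : Type*}

theorem Matrix.IsSymm.mul_cos_sub_comm {A : Matrix ι ι ℝ} (hA : A.IsSymm) (θ : ι → ℝ) (i j : ι) :
    A i j * cos (θ i - θ j) = A j i * cos (θ j - θ i) := by
  rw [hA.apply, ← cos_neg, neg_sub]

theorem exists_int_eq_two_pi_mul_of_sin_eq_zero {x : ℝ} (hsin : sin x = 0) (hcos : 0 < cos x) :
    ∃ k : ℤ, x = 2 * π * k := by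
  have hcos1 : cos x = 1 := (sin_eq_zero_iff_cos_eq.mp hsin).resolve_right (by linarith)
  obtain ⟨k, hk⟩ := (cos_eq_one_iff x).mp hcos1
  exact ⟨k, by rw [← hk]; ring⟩

variable [Fintype ι]

section Graph

variable [DecidableEq ι] {A : Matrix ι ι ℝ}

theorem sum_le_card_sub_one {i : ι} (hA1 : ∀ j, A i j ≤ 1) (hAii : A i i = 0) {T : Finset ι}
    (hi : i ∈ T) (hout : ∀ j ∉ T, A i j = 0) : ∑ j, A i j ≤ #T - 1 := by
  have hsupp : ∑ j ∈ T.erase i, A i j = ∑ j, A i j :=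
    sum_subset (subset_univ _) fun j _ hj ↦ by
      by_cases hji : j = i
      · rw [hji, hAii]
      · exact hout j fun hjT ↦ hj (mem_erase.mpr ⟨hji, hjT⟩)
  calc ∑ j, A i j = ∑ j ∈ T.erase i, A i j := hsupp.symm
    _ ≤ ∑ _j ∈ T.erase i, (1 : ℝ) := sum_le_sum fun j _ ↦ hA1 j
    _ = #T - 1 := by rw [sum_const, nsmul_one, cast_card_erase_of_mem hi]

/-- Connectivity of a graph of minimum degree `> (|ι| - 2) / 2`, phrased through vertex sets
closed under adjacency. -/
theorem eq_univ_of_forall_adj_mem (hA1 : ∀ i j, A i j ≤ 1) (hAdiag : ∀ i, A i i = 0)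
    (hA : A.IsSymm) (hdeg : ∀ i, (Fintype.card ι : ℝ) - 2 < 2 * ∑ j, A i j) {T : Finset ι}
    (hT : T.Nonempty) (hclosed : ∀ i ∈ T, ∀ j, A i j ≠ 0 → j ∈ T) : T = univ := by
  by_contra hne
  obtain ⟨w, hw⟩ : ∃ w, w ∉ T := by simpa [eq_univ_iff_forall] using hne
  obtain ⟨v, hv⟩ := hT
  have hdeg_v : ∑ j, A v j ≤ #T - 1 :=
    sum_le_card_sub_one (hA1 v) (hAdiag v) hv fun j hj ↦ by
      by_contra h
      exact hj (hclosed v hv j h)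
  have hdeg_w : ∑ j, A w j ≤ #Tᶜ - 1 :=
    sum_le_card_sub_one (hA1 w) (hAdiag w) (mem_compl.mpr hw) fun j hj ↦ by
      by_contra h
      exact hw (hclosed j (by simpa using hj) w (by rwa [hA.apply]))
  have hcard : (#T : ℝ) + #Tᶜ = Fintype.card ι := by exact_mod_cast card_add_card_compl T
  linarith [hdeg v, hdeg w]

theorem abs_sum_sub_sum_mul_le {i : ι} (hA1 : ∀ j, A i j ≤ 1) (hAii : A i i = 0) {g : ι → ℝ}
    (hg : ∀ j, |g j| ≤ 1) :
    |∑ j, g j - g i - ∑ j, A i j * g j| ≤ Fintype.card ι - 1 - ∑ j, A i j := by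
  have hi := mem_univ i
  have hlhs : ∑ j, g j - g i - ∑ j, A i j * g j = ∑ j ∈ univ.erase i, (1 - A i j) * g j := by
    rw [← add_sum_erase _ g hi, ← add_sum_erase _ (fun j ↦ A i j * g j) hi, hAii]
    simp only [sub_mul, one_mul, sum_sub_distrib]
    ring
  have hrhs : (Fintype.card ι : ℝ) - 1 - ∑ j, A i j = ∑ j ∈ univ.erase i, (1 - A i j) := by
    rw [← add_sum_erase _ (A i) hi, hAii, sum_sub_distrib, sum_const, nsmul_one,
      cast_card_erase_of_mem hi, card_univ]
    ring
  rw [hlhs, hrhs]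
  refine (abs_sum_le_sum_abs _ _).trans (sum_le_sum fun j _ ↦ ?_)
  rw [abs_mul, abs_of_nonneg (sub_nonneg.mpr (hA1 j))]
  exact mul_le_of_le_one_right (sub_nonneg.mpr (hA1 j)) (hg j)

end Graph

section Laplacian

variable [DecidableEq ι]

def weightedLaplacian (w : ι → ι → ℝ) : Matrix ι ι ℝ :=
  of fun i j ↦ if i = j then ∑ k, w i k else -w i j

variable {w : ι → ι → ℝ}

theorem weightedLaplacian_mulVec (hdiag : ∀ i, w i i = 0) (x : ι → ℝ) (i : ι) :
    (weightedLaplacian w *ᵥ x) i = ∑ j, w i j * (x i - x j) := by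
  have : weightedLaplacian w = diagonal (fun i ↦ ∑ k, w i k) - of w := by
    ext i j
    by_cases h : i = j
    · subst h; simp [weightedLaplacian, hdiag]
    · simp [weightedLaplacian, h]
  rw [this, sub_mulVec, Pi.sub_apply, mulVec_diagonal]
  simp only [mulVec, dotProduct, of_apply, mul_sub, sum_sub_distrib, sum_mul]

theorem dotProduct_weightedLaplacian_mulVec (hw : ∀ i j, w i j = w j i) (hdiag : ∀ i, w i i = 0)
    (x : ι → ℝ) :
    x ⬝ᵥ weightedLaplacian w *ᵥ x = (∑ i, ∑ j, w i j * (x i - x j) ^ 2) / 2 := by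
  have hswap : ∑ i, ∑ j, w i j * x i * (x i - x j) = ∑ i, ∑ j, w i j * x j * (x j - x i) := by
    rw [sum_comm]
    simp only [hw]
  have hsq : ∑ i, ∑ j, w i j * (x i - x j) ^ 2
      = ∑ i, ∑ j, w i j * x i * (x i - x j) + ∑ i, ∑ j, w i j * x j * (x j - x i) := by
    simp only [← sum_add_distrib]
    exact sum_congr rfl fun i _ ↦ sum_congr rfl fun j _ ↦ by ring
  simp only [dotProduct, weightedLaplacian_mulVec hdiag, mul_sum]
  rw [hsq, ← hswap]
  simp only [mul_left_comm (x _), mul_assoc]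
  ring

theorem PosSemidef.sum_sum_mul_sq_nonneg (hw : ∀ i j, w i j = w j i) (hdiag : ∀ i, w i i = 0)
    (hpsd : (weightedLaplacian w).PosSemidef) (x : ι → ℝ) :
    0 ≤ ∑ i, ∑ j, w i j * (x i - x j) ^ 2 := by
  have := hpsd.dotProduct_mulVec_nonneg x
  rw [star_trivial, dotProduct_weightedLaplacian_mulVec hw hdiag] at this
  linarith

theorem eq_zero_of_sum_sum_mul_sq_nonneg (hw : ∀ i j, w i j = w j i)
    (hpos : ∀ x : ι → ℝ, 0 ≤ ∑ i, ∑ j, w i j * (x i - x j) ^ 2) {T : Finset ι}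
    (hcut : ∀ i ∈ T, ∀ j ∉ T, w i j ≤ 0) {i j : ι} (hi : i ∈ T) (hj : j ∉ T) : w i j = 0 := by
  set x : ι → ℝ := fun k ↦ if k ∈ T then 1 else 0
  have hterm : ∀ p q, w p q * (x p - x q) ^ 2 ≤ 0 := by
    intro p q
    by_cases hp : p ∈ T <;> by_cases hq : q ∈ T <;> simp [x, hp, hq]
    · exact hcut p hp q hq
    · exact hw p q ▸ hcut q hq p hp
  have hrow : ∀ p ∈ univ, ∑ q, w p q * (x p - x q) ^ 2 ≤ 0 :=
    fun p _ ↦ sum_nonpos fun q _ ↦ hterm p q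
  have hsum := le_antisymm (sum_nonpos hrow) (hpos x)
  have hij := (sum_eq_zero_iff_of_nonpos fun q _ ↦ hterm i q).mp
    ((sum_eq_zero_iff_of_nonpos hrow).mp hsum i (mem_univ i)) j (mem_univ j)
  simpa [x, hi, hj] using hij

end Laplacian

section OrderParameter

variable (θ : ι → ℝ)

def orderNormSq : ℝ := (∑ j, cos (θ j)) ^ 2 + (∑ j, sin (θ j)) ^ 2

/-- With `Z = ∑ⱼ exp (I θⱼ)`, `orderCos θ i + I * orderSin θ i = conj Z * exp (I θᵢ)`. -/
def orderCos (i : ι) : ℝ := (∑ j, cos (θ j)) * cos (θ i) + (∑ j, sin (θ j)) * sin (θ i)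

def orderSin (i : ι) : ℝ := (∑ j, cos (θ j)) * sin (θ i) - (∑ j, sin (θ j)) * cos (θ i)

theorem orderNormSq_nonneg : 0 ≤ orderNormSq θ := by unfold orderNormSq; positivity

theorem sum_sum_cos_sub : ∑ i, ∑ j, cos (θ i - θ j) = orderNormSq θ := by
  simp only [orderNormSq, cos_sub, sum_add_distrib, sq, sum_mul_sum]

theorem sum_orderCos : ∑ i, orderCos θ i = orderNormSq θ := by
  simp only [orderCos, orderNormSq, sum_add_distrib, ← mul_sum]
  ring

theorem sum_sin_sub (i : ι) : ∑ j, sin (θ j - θ i) = -orderSin θ i := by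
  simp only [orderSin, sin_sub, sum_sub_distrib, ← sum_mul]
  ring

theorem orderCos_sq_add_orderSin_sq (i : ι) :
    orderCos θ i ^ 2 + orderSin θ i ^ 2 = orderNormSq θ := by
  simp only [orderCos, orderSin, orderNormSq]
  linear_combination ((∑ j, cos (θ j)) ^ 2 + (∑ j, sin (θ j)) ^ 2) * sin_sq_add_cos_sq (θ i)

theorem orderCos_mul_add_orderSin_mul (i j : ι) :
    orderCos θ i * orderCos θ j + orderSin θ i * orderSin θ j
      = orderNormSq θ * cos (θ i - θ j) := by
  simp only [orderCos, orderSin, orderNormSq, cos_sub]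
  ring

theorem orderSin_mul_sub_orderCos_mul (i j : ι) :
    orderSin θ i * orderCos θ j - orderCos θ i * orderSin θ j
      = orderNormSq θ * sin (θ i - θ j) := by
  simp only [orderCos, orderSin, orderNormSq, sin_sub]
  ring

end OrderParameter

section Kuramoto

variable {A : Matrix ι ι ℝ} {θ : ι → ℝ} {δ : ℝ}

theorem sum_sum_mul_cos_mul_one_sub_cos_nonneg
    (hstab : ∀ x : ι → ℝ, 0 ≤ ∑ i, ∑ j, A i j * cos (θ i - θ j) * (x i - x j) ^ 2) :
    0 ≤ ∑ i, ∑ j, A i j * (cos (θ i - θ j) * (1 - cos (θ i - θ j))) := by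
  have hpair : ∀ i j, A i j * cos (θ i - θ j) * (cos (θ i) - cos (θ j)) ^ 2
      + A i j * cos (θ i - θ j) * (sin (θ i) - sin (θ j)) ^ 2
      = 2 * (A i j * (cos (θ i - θ j) * (1 - cos (θ i - θ j)))) := by
    intro i j
    rw [cos_sub]
    linear_combination A i j * (cos (θ i) * cos (θ j) + sin (θ i) * sin (θ j))
      * (sin_sq_add_cos_sq (θ i) + sin_sq_add_cos_sq (θ j))
  have h := add_nonneg (hstab (cos ∘ θ)) (hstab (sin ∘ θ))
  simp only [Function.comp_apply, ← sum_add_distrib, hpair, ← mul_sum] at h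
  linarith

theorem two_mul_sq_lt_orderNormSq (hδ0 : 0 ≤ δ) (hδ : (2 + 2 * √2) * δ < Fintype.card ι)
    (hR : (Fintype.card ι : ℝ) ^ 2 / 2 - 2 * Fintype.card ι * δ ≤ orderNormSq θ) :
    2 * δ ^ 2 < orderNormSq θ := by
  have hs : √2 ^ 2 = 2 := sq_sqrt zero_le_two
  -- with `n = card ι`: `n² - 4nδ - 4δ² = (n - 2δ - 2√2 δ)(n - 2δ + 2√2 δ)`
  nlinarith [mul_pos (sub_pos.mpr hδ) (by nlinarith [mul_nonneg (sqrt_nonneg 2) hδ0] :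
    0 < (Fintype.card ι : ℝ) - 2 * δ + 2 * √2 * δ)]

theorem orderCos_sq_gt (hR : 2 * δ ^ 2 < orderNormSq θ) (hv : ∀ i, |orderSin θ i| ≤ δ) (i : ι) :
    orderNormSq θ / 2 < orderCos θ i ^ 2 := by
  have := sq_le_sq' (abs_le.mp (hv i)).1 (abs_le.mp (hv i)).2
  linarith [orderCos_sq_add_orderSin_sq θ i]

theorem cos_sub_neg_of_orderCos_mul_neg (hR : 2 * δ ^ 2 < orderNormSq θ)
    (hv : ∀ i, |orderSin θ i| ≤ δ) {i j : ι} (hij : orderCos θ i * orderCos θ j < 0) :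
    cos (θ i - θ j) < 0 := by
  have hRpos : 0 < orderNormSq θ := lt_of_le_of_lt (by positivity) hR
  have hvv : (orderSin θ i * orderSin θ j) ^ 2 < (orderCos θ i * orderCos θ j) ^ 2 := by
    have hvi := sq_le_sq' (abs_le.mp (hv i)).1 (abs_le.mp (hv i)).2
    have hvj := sq_le_sq' (abs_le.mp (hv j)).1 (abs_le.mp (hv j)).2
    have hui := orderCos_sq_gt hR hv i
    have huj := orderCos_sq_gt hR hv j
    rw [mul_pow, mul_pow]
    calc orderSin θ i ^ 2 * orderSin θ j ^ 2 ≤ δ ^ 2 * δ ^ 2 :=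
          mul_le_mul hvi hvj (sq_nonneg _) (sq_nonneg _)
      _ < orderNormSq θ / 2 * (orderNormSq θ / 2) := by nlinarith
      _ < orderCos θ i ^ 2 * orderCos θ j ^ 2 := by nlinarith
  have hsum : orderCos θ i * orderCos θ j + orderSin θ i * orderSin θ j < 0 := by
    have := (abs_lt.mp (sq_lt_sq.mp hvv)).2
    rw [abs_of_neg hij] at this
    linarith
  rw [orderCos_mul_add_orderSin_mul] at hsum
  exact neg_of_mul_neg_right hsum hRpos.le

/-- `orderSin θ k / orderCos θ k = tan (θₖ - arg Z)`, so `i` is a vertex of largest phase. -/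
theorem orderSin_div_orderCos_eq_of_forall_le (hA0 : ∀ i j, 0 ≤ A i j)
    (heq : ∀ i, ∑ j, A i j * sin (θ i - θ j) = 0) (hu : ∀ i, 0 < orderCos θ i) {i : ι}
    (hmax : ∀ k, orderSin θ k / orderCos θ k ≤ orderSin θ i / orderCos θ i) {j : ι}
    (hij : A i j ≠ 0) : orderSin θ j / orderCos θ j = orderSin θ i / orderCos θ i := by
  set t := fun k ↦ orderSin θ k / orderCos θ k
  have hv : ∀ k, orderSin θ k = t k * orderCos θ k := fun k ↦ (div_mul_cancel₀ _ (hu k).ne').symm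
  have hterm : ∀ k, A i k * (orderCos θ i * orderCos θ k * (t i - t k))
      = orderNormSq θ * (A i k * sin (θ i - θ k)) := by
    intro k
    have h := orderSin_mul_sub_orderCos_mul θ i k
    rw [hv i, hv k] at h
    linear_combination A i k * h
  have hnonneg : ∀ k ∈ univ, 0 ≤ A i k * (orderCos θ i * orderCos θ k * (t i - t k)) :=
    fun k _ ↦ mul_nonneg (hA0 i k) (mul_nonneg (mul_pos (hu i) (hu k)).le (sub_nonneg.mpr (hmax k)))
  have hzero : ∑ k, A i k * (orderCos θ i * orderCos θ k * (t i - t k)) = 0 := by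
    simp only [hterm, ← mul_sum, heq i, mul_zero]
  have hj := (sum_eq_zero_iff_of_nonneg hnonneg).mp hzero j (mem_univ j)
  rw [mul_eq_zero, mul_eq_zero, sub_eq_zero] at hj
  rcases hj with h | h | h
  · exact absurd h hij
  · exact absurd h (mul_pos (hu i) (hu j)).ne'
  · exact h.symm

theorem exists_int_of_orderSin_div_orderCos_eq (hR : 0 < orderNormSq θ) {i j : ι}
    (hui : 0 < orderCos θ i) (huj : 0 < orderCos θ j)
    (ht : orderSin θ i / orderCos θ i = orderSin θ j / orderCos θ j) :
    ∃ k : ℤ, θ i - θ j = 2 * π * k := by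
  set t := orderSin θ i / orderCos θ i
  have hvi : orderSin θ i = t * orderCos θ i := (div_mul_cancel₀ _ hui.ne').symm
  have hvj : orderSin θ j = t * orderCos θ j := by rw [ht]; exact (div_mul_cancel₀ _ huj.ne').symm
  have hsin := orderSin_mul_sub_orderCos_mul θ i j
  have hcos := orderCos_mul_add_orderSin_mul θ i j
  rw [hvi, hvj] at hsin hcos
  refine exists_int_eq_two_pi_mul_of_sin_eq_zero ?_ ?_
  · exact (mul_eq_zero.mp (by linear_combination -hsin)).resolve_left hR.ne'
  · refine pos_of_mul_pos_right (a := orderNormSq θ) ?_ hR.le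
    rw [← hcos]
    nlinarith [mul_nonneg (mul_pos hui huj).le (sq_nonneg t), mul_pos hui huj]

variable [DecidableEq ι]

theorem sum_mul_cos_mul_one_sub_cos_le (hA1 : ∀ i j, A i j ≤ 1) (hAdiag : ∀ i, A i i = 0)
    (hmiss : ∀ i, (Fintype.card ι : ℝ) - 1 - ∑ j, A i j ≤ δ) (i : ι) :
    ∑ j, A i j * (cos (θ i - θ j) * (1 - cos (θ i - θ j)))
      ≤ ∑ j, cos (θ i - θ j) - (∑ j, cos (2 * θ i - 2 * θ j)) / 2
        - Fintype.card ι / 2 + 2 * δ := by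
  have hc := abs_le.mp ((abs_sum_sub_sum_mul_le (hA1 i) (hAdiag i)
    (g := fun j ↦ cos (θ i - θ j)) fun j ↦ abs_cos_le_one _).trans (hmiss i))
  have hc2 := abs_le.mp ((abs_sum_sub_sum_mul_le (hA1 i) (hAdiag i)
    (g := fun j ↦ cos (2 * θ i - 2 * θ j)) fun j ↦ abs_cos_le_one _).trans (hmiss i))
  have hterm : ∀ j, A i j * (cos (θ i - θ j) * (1 - cos (θ i - θ j)))
      = A i j * cos (θ i - θ j) - A i j / 2 - A i j * cos (2 * θ i - 2 * θ j) / 2 := by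
    intro j
    rw [mul_sub, mul_one, ← sq, cos_sq, mul_sub, mul_sub]
    ring
  simp only [sub_self, cos_zero] at hc hc2
  simp only [hterm, sum_sub_distrib, ← sum_div]
  linarith [hmiss i]

theorem orderNormSq_ge (hA1 : ∀ i j, A i j ≤ 1) (hAdiag : ∀ i, A i i = 0)
    (hmiss : ∀ i, (Fintype.card ι : ℝ) - 1 - ∑ j, A i j ≤ δ)
    (hstab : ∀ x : ι → ℝ, 0 ≤ ∑ i, ∑ j, A i j * cos (θ i - θ j) * (x i - x j) ^ 2) :
    (Fintype.card ι : ℝ) ^ 2 / 2 - 2 * Fintype.card ι * δ ≤ orderNormSq θ := by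
  have hsum := (sum_sum_mul_cos_mul_one_sub_cos_nonneg hstab).trans
    (sum_le_sum fun i _ ↦ sum_mul_cos_mul_one_sub_cos_le (θ := θ) hA1 hAdiag hmiss i)
  have h2θ := sum_sum_cos_sub fun i ↦ 2 * θ i
  simp only [sum_add_distrib, sum_sub_distrib, ← sum_div, sum_const, card_univ, nsmul_eq_mul,
    sum_sum_cos_sub, h2θ] at hsum
  linarith [orderNormSq_nonneg fun i ↦ 2 * θ i]

theorem abs_orderSin_le (hA1 : ∀ i j, A i j ≤ 1) (hAdiag : ∀ i, A i i = 0)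
    (hmiss : ∀ i, (Fintype.card ι : ℝ) - 1 - ∑ j, A i j ≤ δ)
    (heq : ∀ i, ∑ j, A i j * sin (θ i - θ j) = 0) (i : ι) : |orderSin θ i| ≤ δ := by
  have h := abs_sum_sub_sum_mul_le (hA1 i) (hAdiag i) (g := fun j ↦ sin (θ j - θ i))
    fun j ↦ abs_sin_le_one _
  have heq' : ∑ j, A i j * sin (θ j - θ i) = 0 := by
    simp only [← neg_sub (θ i), sin_neg, mul_neg, sum_neg_distrib, heq i, neg_zero]
  rw [heq', sum_sin_sub, sub_self, sin_zero, sub_zero, sub_zero, abs_neg] at h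
  exact h.trans (hmiss i)

theorem orderCos_pos (hA0 : ∀ i j, 0 ≤ A i j) (hA1 : ∀ i j, A i j ≤ 1) (hAdiag : ∀ i, A i i = 0)
    (hA : A.IsSymm) (hdeg : ∀ i, (Fintype.card ι : ℝ) - 2 < 2 * ∑ j, A i j)
    (hstab : ∀ x : ι → ℝ, 0 ≤ ∑ i, ∑ j, A i j * cos (θ i - θ j) * (x i - x j) ^ 2)
    (hR : 2 * δ ^ 2 < orderNormSq θ) (hv : ∀ i, |orderSin θ i| ≤ δ) (i : ι) :
    0 < orderCos θ i := by
  set T := univ.filter fun k ↦ 0 < orderCos θ k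
  have hneg : ∀ k ∉ T, orderCos θ k < 0 := by
    intro k hk
    have hsq := orderCos_sq_gt hR hv k
    refine lt_of_le_of_ne (not_lt.mp (by simpa [T] using hk)) fun h ↦ ?_
    rw [h, sq, mul_zero] at hsq
    linarith [orderNormSq_nonneg θ]
  have hcross : ∀ p ∈ T, ∀ q ∉ T, cos (θ p - θ q) < 0 := fun p hp q hq ↦
    cos_sub_neg_of_orderCos_mul_neg hR hv
      (mul_neg_of_pos_of_neg (by simpa [T] using hp) (hneg q hq))
  have hT : T.Nonempty := by
    by_contra h
    have hle : ∑ k, orderCos θ k ≤ 0 := sum_nonpos fun k _ ↦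
      (hneg k fun hk ↦ h ⟨k, hk⟩).le
    rw [sum_orderCos] at hle
    linarith [sq_nonneg δ]
  have hclosed : ∀ p ∈ T, ∀ q, A p q ≠ 0 → q ∈ T := by
    intro p hp q hpq
    by_contra hq
    have hcut := eq_zero_of_sum_sum_mul_sq_nonneg (hA.mul_cos_sub_comm θ) hstab
      (fun p hp q hq ↦ mul_nonpos_of_nonneg_of_nonpos (hA0 p q) (hcross p hp q hq).le) hp hq
    exact mul_ne_zero hpq (hcross p hp q hq).ne hcut
  have hi : i ∈ T := eq_univ_of_forall_adj_mem hA1 hAdiag hA hdeg hT hclosed ▸ mem_univ i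
  simpa [T] using hi

theorem orderSin_div_orderCos_eq (hA0 : ∀ i j, 0 ≤ A i j) (hA1 : ∀ i j, A i j ≤ 1)
    (hAdiag : ∀ i, A i i = 0) (hA : A.IsSymm)
    (hdeg : ∀ i, (Fintype.card ι : ℝ) - 2 < 2 * ∑ j, A i j)
    (heq : ∀ i, ∑ j, A i j * sin (θ i - θ j) = 0) (hu : ∀ i, 0 < orderCos θ i) (i j : ι) :
    orderSin θ i / orderCos θ i = orderSin θ j / orderCos θ j := by
  set t := fun k ↦ orderSin θ k / orderCos θ k
  obtain ⟨m, -, hm⟩ := exists_max_image univ t ⟨i, mem_univ i⟩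
  set T := univ.filter fun k ↦ t k = t m
  have hclosed : ∀ p ∈ T, ∀ q, A p q ≠ 0 → q ∈ T := by
    intro p hp q hpq
    have hp' : t p = t m := by simpa [T] using hp
    have hpmax : ∀ k, t k ≤ t p := fun k ↦ hp' ▸ hm k (mem_univ k)
    simp only [T, mem_filter, mem_univ, true_and]
    exact (orderSin_div_orderCos_eq_of_forall_le hA0 heq hu hpmax hpq).trans hp'
  have hT := eq_univ_of_forall_adj_mem hA1 hAdiag hA hdeg ⟨m, by simp [T]⟩ hclosed
  have hmem : ∀ k, k ∈ T := fun k ↦ hT ▸ mem_univ k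
  exact (mem_filter.mp (hmem i)).2.trans (mem_filter.mp (hmem j)).2.symm

theorem phase_sync_of_stable (hA0 : ∀ i j, 0 ≤ A i j) (hA1 : ∀ i j, A i j ≤ 1)
    (hAdiag : ∀ i, A i i = 0) (hA : A.IsSymm) (hδ0 : 0 ≤ δ)
    (hmiss : ∀ i, (Fintype.card ι : ℝ) - 1 - ∑ j, A i j ≤ δ)
    (hδ : (2 + 2 * √2) * δ < Fintype.card ι) (heq : ∀ i, ∑ j, A i j * sin (θ i - θ j) = 0)
    (hstab : ∀ x : ι → ℝ, 0 ≤ ∑ i, ∑ j, A i j * cos (θ i - θ j) * (x i - x j) ^ 2) (i j : ι) :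
    ∃ k : ℤ, θ i - θ j = 2 * π * k := by
  have hR := two_mul_sq_lt_orderNormSq hδ0 hδ (orderNormSq_ge hA1 hAdiag hmiss hstab)
  have hv := abs_orderSin_le hA1 hAdiag hmiss heq
  have hdeg : ∀ i, (Fintype.card ι : ℝ) - 2 < 2 * ∑ j, A i j := fun i ↦ by
    linarith [hmiss i, mul_nonneg (sqrt_nonneg 2) hδ0]
  have hu := orderCos_pos hA0 hA1 hAdiag hA hdeg hstab hR hv
  exact exists_int_of_orderSin_div_orderCos_eq (lt_of_le_of_lt (by positivity) hR) (hu i) (hu j)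
    (orderSin_div_orderCos_eq hA0 hA1 hAdiag hA hdeg heq hu i j)

end Kuramoto

theorem kuraJ_eq_weightedLaplacian {n : ℕ} (A : Matrix (Fin n) (Fin n) ℝ) (θ : Fin n → ℝ) :
    kuraJ A θ = weightedLaplacian fun i j ↦ A i j * cos (θ i - θ j) := rfl

theorem homogeneous_stable_implies_phase_sync_general
    (n : ℕ) (hn : 2 ≤ n) (A : Matrix (Fin n) (Fin n) ℝ)
    (hA01 : ∀ i j, A i j = 0 ∨ A i j = 1) (hAsym : A.IsSymm) (hAdiag : ∀ i, A i i = 0)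
    (μ : ℝ) (hμ : (3 - Real.sqrt 2) / 2 < μ) (hμ1 : μ ≤ 1)
    (hdense : ∀ i, μ * ((n : ℝ) - 1) ≤ ∑ j, A i j)
    (θ : Fin n → ℝ)
    (heq : ∀ i, ∑ j, A i j * Real.sin (θ i - θ j) = 0)
    (hpsd : (kuraJ A θ).PosSemidef) :
    ∀ i j, ∃ k : ℤ, θ i - θ j = 2 * π * k := by
  have hA0 : ∀ i j, 0 ≤ A i j := fun i j ↦ by rcases hA01 i j with h | h <;> simp [h]
  have hA1 : ∀ i j, A i j ≤ 1 := fun i j ↦ by rcases hA01 i j with h | h <;> simp [h]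
  rw [kuraJ_eq_weightedLaplacian] at hpsd
  have hstab := PosSemidef.sum_sum_mul_sq_nonneg (hAsym.mul_cos_sub_comm θ)
    (fun i ↦ by simp [hAdiag]) hpsd
  have hn1 : (1 : ℝ) ≤ n := by exact_mod_cast (by omega : 1 ≤ n)
  -- `(2 + 2√2)(1 - μ) < 1` is `μ > (3 - √2)/2`, as `(1 + √2)(√2 - 1) = 1`
  have hμ' : (2 + 2 * √2) * (1 - μ) < 1 := by
    nlinarith [sq_sqrt (zero_le_two : (0 : ℝ) ≤ 2), sqrt_nonneg 2]
  refine phase_sync_of_stable (δ := (1 - μ) * (n - 1)) hA0 hA1 hAdiag hAsym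
    (mul_nonneg (by linarith) (by linarith)) (fun i ↦ ?_) ?_ heq hstab
  · simp only [Fintype.card_fin]
    linarith [hdense i]
  · simp only [Fintype.card_fin]
    nlinarith

/-- Homogeneous Kuramoto model on a μ-dense network with `μ > (3 − √2)/2`: every stable
equilibrium is phase synchronized, i.e. `θ_i ≡ θ_j (mod 2π)` for all `i, j`. -/
theorem homogeneous_stable_implies_phase_sync
    (n : ℕ) (hn : 2 ≤ n) (A : Matrix (Fin n) (Fin n) ℝ)
    (hA01 : ∀ i j, A i j = 0 ∨ A i j = 1) (hAsym : A.IsSymm) (hAdiag : ∀ i, A i i = 0)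
    (μ : ℝ) (hμ : (3 - Real.sqrt 2) / 2 < μ) (hμ1 : μ ≤ 1)
    (hdense : ∀ i, μ * ((n : ℝ) - 1) ≤ ∑ j, A i j)
    (K : ℝ) (hK : 0 < K)
    (θ : Fin n → ℝ)
    (heq : ∀ i, ∑ j, A i j * Real.sin (θ i - θ j) = 0)
    (hpsd : (kuraJ A θ).PosSemidef) :
    ∀ i j, ∃ k : ℤ, θ i - θ j = 2 * π * k :=
  homogeneous_stable_implies_phase_sync_general n hn A hA01 hAsym hAdiag μ hμ hμ1 hdense θ heq hpsd
end
end
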